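/- arXiv:2109.11436 — 5 statements merged into one kernel-verified Lean document; each statement's English description precedes it below -/
import Mathlib

section
/- Gauss–Chebyshev quadrature with n nodes is exact for polynomials of degree at most 2n − 1: for every integer n ≥ 1 and every real polynomial p with deg p ≤ 2n − 1, ∫_{−1}^{1} p(t) (1 − t²)^{−1/2} dt = (π/n) ∑_{l=1}^{n} p(t_l), where t_l = cos((l − 1/2)π/n) are the Chebyshev points. -/
open Real Polynomial

namespace Polynomial.Chebyshev

theorem sumZeroes_eq_sum_Icc (n : ℕ) (P : ℝ[X]) :
    sumZeroes n P = π / n * ∑ l ∈ Finset.Icc 1 n, P.eval (cos (((l : ℝ) - 1 / 2) * π / n)) := by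
  rw [sumZeroes, ← Finset.Ico_add_one_right_eq_Icc, Finset.sum_Ico_eq_sum_range,
    Nat.add_sub_cancel]
  congr 2 with i
  push_cast
  ring_nf

end Polynomial.Chebyshev

/-- Gauss–Chebyshev quadrature with `n` nodes is exact for polynomials of degree
at most `2n - 1`. -/
theorem gauss_chebyshev_quadrature_exact (n : ℕ) (hn : 1 ≤ n) (p : Polynomial ℝ)
    (hp : p.natDegree ≤ 2 * n - 1) :
    (∫ t in (-1 : ℝ)..1, p.eval t * (Real.sqrt (1 - t ^ 2))⁻¹)
      = Real.pi / n *
        ∑ l ∈ Finset.Icc 1 n, p.eval (Real.cos (((l : ℝ) - 1 / 2) * Real.pi / n)) := by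
  have hdeg : p.degree < 2 * n :=
    degree_le_natDegree.trans_lt (by exact_mod_cast (by omega : p.natDegree < 2 * n))
  -- `Chebyshev.integral_measureT` writes the weight as `√((1 - x ^ 2)⁻¹)`.
  simp_rw [← Real.sqrt_inv]
  rw [← Chebyshev.integral_measureT, Chebyshev.integral_eq_sumZeroes (by omega) hdeg,
    Chebyshev.sumZeroes_eq_sum_Icc]
end

section
/- High-index Chebyshev coefficients of a product: let N, n_q be natural numbers, let c_0, …, c_N and q_0, …, q_{n_q} be real numbers, and set f = (c_0/2)·T_0 + ∑_{i=1}^{N} c_i T_i and Q = ∑_{j=0}^{n_q} q_j T_j (polynomials in ℝ[X]). Then for every integer k ≥ n_q + 1, the coefficient of T_k in the expansion of the product Q·f in the Chebyshev basis equals (1/2) ∑_{j=0}^{n_q} (c_{k−j} + c_{k+j}) q_j, where c_m is interpreted as 0 for m > N. -/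
/-!
The Chebyshev polynomials `T_n` have degree `n` and leading coefficient `2 ^ (n - 1)`, so they form a
basis of `K[X]` over any field `K` of characteristic `≠ 2`. The product formula
`2 T_j T_i = T_{i+j} + T_{|i-j|}` shows that for `j < k` the `T_k`-coefficient of `T_j * p` is half
the sum of the `T_{k-j}`- and `T_{k+j}`-coefficients of `p`. Summing over the terms of `Q` gives the
formula; the halved constant term of `f` never contributes because `k - j ≥ 1`.
-/

open Polynomial Module

namespace Polynomial.Chebyshev

lemma two_mul_T_mul_T_natCast {R : Type*} [CommRing R] (i j : ℕ) :
    2 * T R i * T R j = T R (i + j : ℕ) + T R (Nat.dist i j) := by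
  rw [T_mul_T, ← T_natAbs R ((i : ℤ) - (j : ℤ)), Nat.cast_add]
  congr 3
  unfold Nat.dist
  omega

variable (K : Type*) [Field K] [NeZero (2 : K)]

noncomputable def basisT : Basis ℕ K K[X] :=
  Sequence.basis ⟨fun n ↦ T K n, fun n ↦ by simp⟩
    fun n ↦ by simp [isUnit_iff_ne_zero, two_ne_zero]

variable {K}

@[simp]
lemma basisT_apply (n : ℕ) : basisT K n = T K n := Sequence.basis_eq_self _ _ n

lemma basisT_repr_sum_smul_T (s : Finset ℕ) (a : ℕ → K) (k : ℕ) :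
    (basisT K).repr (∑ i ∈ s, a i • T K i) k = if k ∈ s then a k else 0 := by
  simp [← basisT_apply, Finsupp.single_apply]

lemma two_mul_basisT_repr_T_mul_of_lt {j k : ℕ} (hjk : j < k) (p : K[X]) :
    2 * (basisT K).repr (T K j * p) k =
      (basisT K).repr p (k - j) + (basisT K).repr p (k + j) := by
  let coeffAt (m : ℕ) : K[X] →ₗ[K] K := Finsupp.lapply m ∘ₗ (basisT K).repr.toLinearMap
  have key : coeffAt k ∘ₗ LinearMap.mulLeft K (2 * T K j) = coeffAt (k - j) + coeffAt (k + j) := by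
    refine (basisT K).ext fun i ↦ ?_
    have hsum : j + i = k ↔ i = k - j := by omega
    have hdist : Nat.dist j i = k ↔ i = k + j := by unfold Nat.dist; omega
    simp only [coeffAt, LinearMap.comp_apply, LinearMap.add_apply, LinearMap.mulLeft_apply,
      LinearEquiv.coe_coe, Finsupp.lapply_apply, basisT_apply]
    rw [two_mul_T_mul_T_natCast, ← basisT_apply, ← basisT_apply, ← basisT_apply]
    simp only [map_add, Basis.repr_self, Finsupp.add_apply, Finsupp.single_apply, hsum, hdist]
  have := LinearMap.congr_fun key p
  simp only [coeffAt, LinearMap.comp_apply, LinearMap.add_apply, LinearMap.mulLeft_apply,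
    LinearEquiv.coe_coe, Finsupp.lapply_apply] at this
  rwa [mul_assoc, two_mul, map_add, Finsupp.add_apply, ← two_mul] at this

end Polynomial.Chebyshev

open Finset Polynomial.Chebyshev

/-- High-index Chebyshev coefficients of a product: with
`f = (c_0/2)·T_0 + ∑_{i=1}^N c_i T_i` and `Q = ∑_{j=0}^{n_q} q_j T_j`, if
`Q·f = ∑_k b_k T_k` is the (unique) Chebyshev-basis expansion, then for every
`k ≥ n_q + 1` one has `b_k = (1/2) ∑_{j=0}^{n_q} (c_{k-j} + c_{k+j}) q_j`,
where `c_m` is interpreted as `0` for `m > N`. -/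
theorem chebyshev_product_high_index_coeff (N nq : ℕ) (c q b : ℕ → ℝ)
    (f Q : Polynomial ℝ)
    (hf : f = Polynomial.C (c 0 / 2) * Polynomial.Chebyshev.T ℝ 0 +
        ∑ i ∈ Finset.Icc 1 N, Polynomial.C (c i) * Polynomial.Chebyshev.T ℝ i)
    (hQ : Q = ∑ j ∈ Finset.range (nq + 1), Polynomial.C (q j) * Polynomial.Chebyshev.T ℝ j)
    (hb0 : ∀ k : ℕ, N + nq < k → b k = 0)
    (hexp : Q * f = ∑ k ∈ Finset.range (N + nq + 1),
        Polynomial.C (b k) * Polynomial.Chebyshev.T ℝ k)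
    (k : ℕ) (hk : nq + 1 ≤ k) :
    b k = (1 / 2) * ∑ j ∈ Finset.range (nq + 1),
        ((if k - j ≤ N then c (k - j) else 0) + (if k + j ≤ N then c (k + j) else 0)) * q j := by
  simp only [← smul_eq_C_mul] at hf hQ hexp
  have hb : b k = (basisT ℝ).repr (Q * f) k := by
    rw [hexp, basisT_repr_sum_smul_T]
    split_ifs with hkM
    · rfl
    · exact hb0 k (by simp at hkM; omega)
  have hf_coeff {m : ℕ} (hm : 1 ≤ m) : (basisT ℝ).repr f m = if m ≤ N then c m else 0 := by
    have hT0 : T ℝ 0 = basisT ℝ 0 := by simp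
    rw [hf, map_add, Finsupp.add_apply, basisT_repr_sum_smul_T, hT0, map_smul, Basis.repr_self]
    simp [hm, Nat.one_le_iff_ne_zero.mp hm]
  calc b k = ∑ j ∈ range (nq + 1), q j * (basisT ℝ).repr (T ℝ j * f) k := by
        rw [hb, hQ, sum_mul, map_sum, Finsupp.finsetSum_apply]
        simp only [smul_mul_assoc, map_smul, Finsupp.smul_apply, smul_eq_mul]
    _ = (1 / 2) * ∑ j ∈ range (nq + 1),
          ((basisT ℝ).repr f (k - j) + (basisT ℝ).repr f (k + j)) * q j := by
        rw [mul_sum]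
        refine sum_congr rfl fun j hj ↦ ?_
        rw [← two_mul_basisT_repr_T_mul_of_lt (by simp at hj; omega) f]
        ring
    _ = _ := by
        congr 1
        refine sum_congr rfl fun j hj ↦ ?_
        rw [hf_coeff (by simp at hj; omega), hf_coeff (by omega)]
end

section
/- Exactness of the approximated bivariate Chebyshev coefficients for polynomials: let n_x, n_y ≥ 1 be integers, let f(x, y) be a real polynomial in two variables, and let i, j be natural numbers such that deg_x f + i ≤ 2n_x − 1 and deg_y f + j ≤ 2n_y − 1. Then the quadrature approximation c_{i,j,n_x,n_y} := (ε_{i,j}/(n_x n_y)) ∑_{l_x=1}^{n_x} ∑_{l_y=1}^{n_y} f(t_{l_x}, t_{l_y}) T_i(t_{l_x}) T_j(t_{l_y}) equals the exact coefficient c_{i,j} = (ε_{i,j}/π²) ∫_{−1}^{1} ∫_{−1}^{1} f(x, y) T_i(x) T_j(y) (1 − x²)^{−1/2} (1 − y²)^{−1/2} dx dy. -/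
/-!
Gauss–Chebyshev quadrature with `n` nodes integrates every polynomial of degree `< 2n` exactly
against the weight `(1 - x²)^(-1/2)` (`Polynomial.Chebyshev.integral_eq_sumZeroes`). Expanding `f`
into monomials `x^a y^b`, the double sum and the double integral both split into products of
univariate terms built from `x^a T_i(x)` and `y^b T_j(y)`, and the degree hypotheses put each of
these in the range where the quadrature is exact.
-/

open Real Polynomial MeasureTheory Finset Polynomial.Chebyshev

theorem MvPolynomial.eval_fin_two_eq_sum {R : Type*} [CommSemiring R]
    (f : MvPolynomial (Fin 2) R) (a b : R) :
    MvPolynomial.eval ![a, b] f = ∑ d ∈ f.support, MvPolynomial.coeff d f * (a ^ d 0 * b ^ d 1) := by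
  rw [MvPolynomial.eval_eq']
  simp [Fin.prod_univ_two]

theorem sum_sum_eval_mul_mul {R ι κ : Type*} [CommSemiring R] (f : MvPolynomial (Fin 2) R)
    (s : Finset ι) (t : Finset κ) (x u : ι → R) (y v : κ → R) :
    ∑ l ∈ s, ∑ m ∈ t, MvPolynomial.eval ![x l, y m] f * u l * v m =
      ∑ d ∈ f.support, MvPolynomial.coeff d f *
        ((∑ l ∈ s, x l ^ d 0 * u l) * ∑ m ∈ t, y m ^ d 1 * v m) := by
  simp_rw [MvPolynomial.eval_fin_two_eq_sum, sum_mul_sum, mul_sum, sum_mul]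
  rw [sum_congr rfl fun l _ => sum_comm, sum_comm]
  exact sum_congr rfl fun d _ => sum_congr rfl fun l _ => sum_congr rfl fun m _ => by ring

theorem integral_integral_eval_mul_mul (f : MvPolynomial (Fin 2) ℝ) (μ ν : Measure ℝ)
    (u v : ℝ → ℝ) (hu : ∀ k : ℕ, Integrable (fun x => x ^ k * u x) μ)
    (hv : ∀ k : ℕ, Integrable (fun y => y ^ k * v y) ν) :
    ∫ x, ∫ y, MvPolynomial.eval ![x, y] f * u x * v y ∂ν ∂μ =
      ∑ d ∈ f.support, MvPolynomial.coeff d f *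
        ((∫ x, x ^ d 0 * u x ∂μ) * ∫ y, y ^ d 1 * v y ∂ν) := by
  have inner (x : ℝ) : ∫ y, MvPolynomial.eval ![x, y] f * u x * v y ∂ν =
      ∑ d ∈ f.support, MvPolynomial.coeff d f * (x ^ d 0 * u x) * ∫ y, y ^ d 1 * v y ∂ν := by
    have expand : (fun y => MvPolynomial.eval ![x, y] f * u x * v y) = fun y =>
        ∑ d ∈ f.support, MvPolynomial.coeff d f * (x ^ d 0 * u x) * (y ^ d 1 * v y) := by
      ext y
      rw [MvPolynomial.eval_fin_two_eq_sum, sum_mul, sum_mul]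
      exact sum_congr rfl fun d _ => by ring
    rw [expand, integral_finsetSum _ fun d _ => (hv (d 1)).const_mul _]
    exact sum_congr rfl fun d _ => integral_const_mul _ _
  simp_rw [inner]
  rw [integral_finsetSum _ fun d _ => ?_]
  · refine sum_congr rfl fun d _ => ?_
    rw [integral_mul_const, integral_const_mul]
    ring
  · exact ((hu (d 0)).const_mul _).mul_const _

theorem integral_measureT_eq_sum_Icc {n : ℕ} {P : ℝ[X]} (hP : P.natDegree < 2 * n) :
    ∫ x, P.eval x ∂measureT = π / n * ∑ l ∈ Icc 1 n, P.eval (cos (((l : ℝ) - 1 / 2) * π / n)) := by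
  rw [integral_eq_sumZeroes (by omega) (degree_le_natDegree.trans_lt (mod_cast hP)), sumZeroes,
    range_eq_Ico, ← Ico_add_one_right_eq_Icc, ← sum_Ico_add' _ 0 n 1]
  refine congrArg _ (sum_congr rfl fun l _ => ?_)
  congr 2
  push_cast
  ring

theorem integral_pow_mul_eval_T_measureT {n k i : ℕ} (hki : k + i < 2 * n) :
    ∫ x, x ^ k * (T ℝ i).eval x ∂measureT =
      π / n * ∑ l ∈ Icc 1 n, cos (((l : ℝ) - 1 / 2) * π / n) ^ k *
        (T ℝ i).eval (cos (((l : ℝ) - 1 / 2) * π / n)) := by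
  have hdeg : (X ^ k * T ℝ i).natDegree < 2 * n :=
    (natDegree_mul_le.trans (add_le_add (natDegree_X_pow_le k) (natDegree_T ℝ i).le)).trans_lt
      (by simpa using hki)
  simpa using integral_measureT_eq_sum_Icc hdeg

theorem integral_integral_mul_sqrt_inv_eq_measureT (F : ℝ → ℝ → ℝ) :
    ∫ x in (-1 : ℝ)..1, ∫ y in (-1 : ℝ)..1, F x y * ((√(1 - x ^ 2))⁻¹ * (√(1 - y ^ 2))⁻¹) =
      ∫ x, ∫ y, F x y ∂measureT ∂measureT := by
  simp_rw [integral_measureT, ← intervalIntegral.integral_mul_const, sqrt_inv]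
  refine intervalIntegral.integral_congr fun x _ => intervalIntegral.integral_congr fun y _ => ?_
  ring

/-- Exactness of the approximated bivariate Chebyshev coefficients for polynomials:
if `deg_x f + i ≤ 2n_x - 1` and `deg_y f + j ≤ 2n_y - 1`, then the tensor
Gauss–Chebyshev quadrature approximation `c_{i,j,n_x,n_y}` equals the exact
coefficient `c_{i,j}`. -/
theorem approx_bivariate_chebyshev_coeff_exact (nx ny : ℕ) (hx : 1 ≤ nx) (hy : 1 ≤ ny)
    (f : MvPolynomial (Fin 2) ℝ) (i j : ℕ)
    (hfx : f.degreeOf 0 + i ≤ 2 * nx - 1) (hfy : f.degreeOf 1 + j ≤ 2 * ny - 1) :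
    ((if i = 0 ∧ j = 0 then (1 : ℝ) else if i = 0 ∨ j = 0 then 2 else 4) / ((nx : ℝ) * ny)) *
        ∑ lx ∈ Finset.Icc 1 nx, ∑ ly ∈ Finset.Icc 1 ny,
          MvPolynomial.eval
              ![Real.cos (((lx : ℝ) - 1 / 2) * Real.pi / nx),
                Real.cos (((ly : ℝ) - 1 / 2) * Real.pi / ny)] f *
            (Polynomial.Chebyshev.T ℝ i).eval (Real.cos (((lx : ℝ) - 1 / 2) * Real.pi / nx)) *
            (Polynomial.Chebyshev.T ℝ j).eval (Real.cos (((ly : ℝ) - 1 / 2) * Real.pi / ny))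
      = ((if i = 0 ∧ j = 0 then (1 : ℝ) else if i = 0 ∨ j = 0 then 2 else 4) / Real.pi ^ 2) *
        ∫ x in (-1 : ℝ)..1, ∫ y in (-1 : ℝ)..1,
          MvPolynomial.eval ![x, y] f *
            (Polynomial.Chebyshev.T ℝ i).eval x * (Polynomial.Chebyshev.T ℝ j).eval y *
            ((Real.sqrt (1 - x ^ 2))⁻¹ * (Real.sqrt (1 - y ^ 2))⁻¹) := by
  have integrable_pow_mul_T (m k : ℕ) : Integrable (fun x => x ^ k * (T ℝ m).eval x) measureT :=
    integrable_measureT (by fun_prop)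
  rw [integral_integral_mul_sqrt_inv_eq_measureT,
    integral_integral_eval_mul_mul _ _ _ _ _ (integrable_pow_mul_T i) (integrable_pow_mul_T j),
    sum_sum_eval_mul_mul, mul_sum, mul_sum]
  refine sum_congr rfl fun d hd => ?_
  have hdx := MvPolynomial.monomial_le_degreeOf 0 hd
  have hdy := MvPolynomial.monomial_le_degreeOf 1 hd
  rw [integral_pow_mul_eval_T_measureT (n := nx) (by omega),
    integral_pow_mul_eval_T_measureT (n := ny) (by omega)]
  generalize (∑ l ∈ Icc 1 nx, _ : ℝ) = Sx
  generalize (∑ l ∈ Icc 1 ny, _ : ℝ) = Sy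
  field_simp
end

section
/- Bivariate product coefficient formula at high indices: let N_x, N_y, n_{q_1}, n_{q_2} be natural numbers, let a_{i,j} (0 ≤ i ≤ N_x, 0 ≤ j ≤ N_y) and q_{r,s} (0 ≤ r ≤ n_{q_1}, 0 ≤ s ≤ n_{q_2}) be real numbers, and set f(x, y) = ∑_{i=0}^{N_x} ∑_{j=0}^{N_y} a_{i,j} T_i(x) T_j(y) and Q(x, y) = ∑_{r=0}^{n_{q_1}} ∑_{s=0}^{n_{q_2}} q_{r,s} T_r(x) T_s(y). Then for all integers i ≥ n_{q_1} + 1 and j ≥ n_{q_2} + 1, the coefficient of T_i(x) T_j(y) in the expansion of the product f·Q in the tensor Chebyshev basis equals (1/4) ∑_{r=0}^{n_{q_1}} ∑_{s=0}^{n_{q_2}} (a_{i−r, j−s} + a_{i−r, j+s} + a_{i+r, j−s} + a_{i+r, j+s}) q_{r,s}, where a_{m,n} is interpreted as 0 whenever m > N_x or n > N_y. -/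
/-!
Substitute `x = (z + z⁻¹) / 2`, `y = (w + w⁻¹) / 2` (on the torus `z = e^{iθ}`, `w = e^{iφ}` this
is `x = cos θ`, `y = cos φ`). Then `T_m(x) T_n(y)` becomes the Laurent polynomial
`(z^m + z^{-m}) (w^n + w^{-n}) / 4`, so for `i, j ≥ 1` the coefficient of `T_i(x) T_j(y)` in any
Chebyshev expansion is four times the coefficient of `z^i w^j`. Multiplying by `T_r(x) T_s(y)`
averages the Laurent coefficients shifted by `(±r, ±s)`; since `r < i` and `s < j` the shifted
exponents stay positive, where the Laurent coefficients of `f` are again `a / 4`.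
-/

open Polynomial

theorem Polynomial.Chebyshev.two_mul_eval_T_of_two_mul_eq_add {A : Type*} [CommRing A]
    {x u v : A} (huv : u * v = 1) (hx : 2 * x = u + v) (n : ℕ) :
    2 * (Chebyshev.T A n).eval x = u ^ n + v ^ n := by
  rw [← dickson_one_one_eval_add_inv u v huv, dickson_one_one_eq_chebyshev_C, ← hx,
    show 2 * x = (2 * X : A[X]).eval x by simp, ← eval_comp, Chebyshev.C_comp_two_mul_X,
    eval_mul, eval_ofNat]

namespace BivariateChebyshev

open AddMonoidAlgebra

variable {K : Type*} [Field K]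

-- `cos ⟨g, θ⟩` on the torus `z = e^{iθ}`, with `single g 1` the monomial `z ^ g`.
noncomputable def cosMonomial (g : ℤ × ℤ) : K[ℤ × ℤ] :=
  (2⁻¹ : K) • (single g 1 + single (-g) 1)

theorem cosMonomial_mul_cosMonomial (g h : ℤ × ℤ) :
    (cosMonomial g * cosMonomial h : K[ℤ × ℤ]) =
      (2⁻¹ : K) • (cosMonomial (g + h) + cosMonomial (g - h)) := by
  simp only [cosMonomial, smul_mul_smul, add_mul, mul_add, single_mul_single, smul_add, smul_smul,
    mul_one, neg_add, sub_eq_add_neg, neg_neg]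
  abel

theorem coeff_mul_cosMonomial (p : K[ℤ × ℤ]) (g x : ℤ × ℤ) :
    (p * cosMonomial g).coeff x = 2⁻¹ * (p.coeff (x - g) + p.coeff (x + g)) := by
  rw [cosMonomial, mul_smul_comm, mul_add, coeff_smul_apply, AddMonoidAlgebra.coeff_add,
    Finsupp.add_apply, coeff_mul_single_apply, coeff_mul_single_apply, neg_neg,
    ← sub_eq_add_neg, mul_one, mul_one, smul_eq_mul]

noncomputable def joukowski : MvPolynomial (Fin 2) K →ₐ[K] K[ℤ × ℤ] :=
  MvPolynomial.aeval ![cosMonomial (1, 0), cosMonomial (0, 1)]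

variable [CharZero K]

theorem coeff_mul_cosMonomial_mul_cosMonomial (p : K[ℤ × ℤ]) (r s i j : ℤ) :
    (p * (cosMonomial (r, 0) * cosMonomial (0, s))).coeff (i, j) =
      4⁻¹ * (p.coeff (i - r, j - s) + p.coeff (i - r, j + s) + p.coeff (i + r, j - s) +
        p.coeff (i + r, j + s)) := by
  rw [cosMonomial_mul_cosMonomial, mul_smul_comm, mul_add, coeff_smul_apply,
    AddMonoidAlgebra.coeff_add, Finsupp.add_apply, coeff_mul_cosMonomial, coeff_mul_cosMonomial]
  simp only [Prod.mk_add_mk, Prod.mk_sub_mk, add_zero, zero_add, sub_zero, zero_sub,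
    sub_neg_eq_add, ← sub_eq_add_neg, smul_eq_mul]
  ring

theorem aeval_cosMonomial_T (g : ℤ × ℤ) (n : ℕ) :
    aeval (cosMonomial g : K[ℤ × ℤ]) (Chebyshev.T K n) = cosMonomial (n • g) := by
  have two_mul_cosMonomial (h : ℤ × ℤ) :
      2 * (cosMonomial h : K[ℤ × ℤ]) = single h 1 + single (-h) 1 := by
    rw [cosMonomial, two_mul, ← two_smul K, smul_smul]
    norm_num
  have h := Chebyshev.two_mul_eval_T_of_two_mul_eq_add (u := single g 1) (v := single (-g) 1)
    (by simp [single_mul_single, one_def]) (two_mul_cosMonomial g) n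
  rw [single_pow, single_pow, one_pow, smul_neg, ← two_mul_cosMonomial, two_mul, two_mul,
    ← two_smul K, ← two_smul K] at h
  rw [Chebyshev.aeval_T]
  exact smul_right_injective _ two_ne_zero h

theorem joukowski_aeval_T_mul_aeval_T (m n : ℕ) :
    joukowski (aeval (MvPolynomial.X 0) (Chebyshev.T K m) *
      aeval (MvPolynomial.X 1) (Chebyshev.T K n)) =
      (cosMonomial (m, 0) * cosMonomial (0, n) : K[ℤ × ℤ]) := by
  rw [map_mul, ← aeval_algHom_apply, ← aeval_algHom_apply, joukowski, MvPolynomial.aeval_X,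
    MvPolynomial.aeval_X, Matrix.cons_val_zero, Matrix.cons_val_one, Matrix.cons_val_zero,
    aeval_cosMonomial_T, aeval_cosMonomial_T]
  simp

noncomputable def tensorChebyshevSum (M N : ℕ) (c : ℕ → ℕ → K) : MvPolynomial (Fin 2) K :=
  ∑ i ∈ Finset.range (M + 1), ∑ j ∈ Finset.range (N + 1),
    MvPolynomial.C (c i j) * aeval (MvPolynomial.X 0) (Chebyshev.T K i) *
      aeval (MvPolynomial.X 1) (Chebyshev.T K j)

theorem coeff_mul_joukowski_tensorChebyshevSum (p : K[ℤ × ℤ]) (M N : ℕ) (c : ℕ → ℕ → K)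
    (i j : ℤ) :
    (p * joukowski (tensorChebyshevSum M N c)).coeff (i, j) =
      4⁻¹ * ∑ r ∈ Finset.range (M + 1), ∑ s ∈ Finset.range (N + 1),
        (p.coeff (i - r, j - s) + p.coeff (i - r, j + s) + p.coeff (i + r, j - s) +
          p.coeff (i + r, j + s)) * c r s := by
  simp only [tensorChebyshevSum, map_sum, Finset.mul_sum, AddMonoidAlgebra.coeff_sum,
    Finsupp.finsetSum_apply]
  refine Finset.sum_congr rfl fun r _ => Finset.sum_congr rfl fun s _ => ?_
  rw [mul_assoc, MvPolynomial.C_mul', map_smul, joukowski_aeval_T_mul_aeval_T, mul_smul_comm,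
    coeff_smul_apply, coeff_mul_cosMonomial_mul_cosMonomial, smul_eq_mul]
  ring

theorem coeff_joukowski_tensorChebyshevSum (M N : ℕ) (c : ℕ → ℕ → K) {i j : ℕ} (hi : 0 < i)
    (hj : 0 < j) :
    (joukowski (tensorChebyshevSum M N c)).coeff (i, j) =
      4⁻¹ * if i ≤ M ∧ j ≤ N then c i j else 0 := by
  have coeff_one (a b : ℤ) : (1 : K[ℤ × ℤ]).coeff (a, b) = if a = 0 ∧ b = 0 then 1 else 0 := by
    simp only [one_def, coeff_single, Finsupp.single_apply, Prod.ext_iff, Prod.fst_zero,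
      Prod.snd_zero, eq_comm]
  have only_unshifted_term (r s : ℕ) :
      ((1 : K[ℤ × ℤ]).coeff (i - r, j - s) + (1 : K[ℤ × ℤ]).coeff (i - r, j + s) +
        (1 : K[ℤ × ℤ]).coeff (i + r, j - s) + (1 : K[ℤ × ℤ]).coeff (i + r, j + s)) * c r s =
        if i = r ∧ j = s then c r s else 0 := by
    simp only [coeff_one]
    split_ifs <;> first | omega | simp
  rw [← one_mul (joukowski _), coeff_mul_joukowski_tensorChebyshevSum]
  simp [only_unshifted_term, Finset.sum_ite_eq, ite_and]

theorem coeff_joukowski_tensorChebyshevSum_mul (M N m n : ℕ) (c d : ℕ → ℕ → K) {i j : ℕ}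
    (hi : m < i) (hj : n < j) :
    (joukowski (tensorChebyshevSum M N c * tensorChebyshevSum m n d)).coeff (i, j) =
      4⁻¹ * (4⁻¹ * ∑ r ∈ Finset.range (m + 1), ∑ s ∈ Finset.range (n + 1),
        ((if i - r ≤ M ∧ j - s ≤ N then c (i - r) (j - s) else 0) +
          (if i - r ≤ M ∧ j + s ≤ N then c (i - r) (j + s) else 0) +
          (if i + r ≤ M ∧ j - s ≤ N then c (i + r) (j - s) else 0) +
          (if i + r ≤ M ∧ j + s ≤ N then c (i + r) (j + s) else 0)) * d r s) := by
  rw [map_mul, coeff_mul_joukowski_tensorChebyshevSum]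
  congr 1
  rw [Finset.mul_sum]
  refine Finset.sum_congr rfl fun r hr => ?_
  rw [Finset.mul_sum]
  refine Finset.sum_congr rfl fun s hs => ?_
  rw [Finset.mem_range] at hr hs
  have coeff_c (u v : ℕ) (hu : 0 < u) (hv : 0 < v) :=
    coeff_joukowski_tensorChebyshevSum M N c hu hv
  rw [← Nat.cast_sub (by omega : r ≤ i), ← Nat.cast_sub (by omega : s ≤ j), ← Nat.cast_add,
    ← Nat.cast_add, coeff_c (i - r) (j - s) (by omega) (by omega),
    coeff_c (i - r) (j + s) (by omega) (by omega), coeff_c (i + r) (j - s) (by omega) (by omega),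
    coeff_c (i + r) (j + s) (by omega) (by omega)]
  ring

end BivariateChebyshev

open BivariateChebyshev

/-- Bivariate product coefficient formula at high indices: with
`f = ∑_{i=0}^{N_x} ∑_{j=0}^{N_y} a_{i,j} T_i(x) T_j(y)` and
`Q = ∑_{r=0}^{n_{q_1}} ∑_{s=0}^{n_{q_2}} q_{r,s} T_r(x) T_s(y)`, if
`f·Q = ∑_{i,j} b_{i,j} T_i(x) T_j(y)` is the (unique) tensor Chebyshev expansion,
then for all `i ≥ n_{q_1} + 1` and `j ≥ n_{q_2} + 1`,
`b_{i,j} = (1/4) ∑_{r,s} (a_{i-r,j-s} + a_{i-r,j+s} + a_{i+r,j-s} + a_{i+r,j+s}) q_{r,s}`,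
with `a_{m,n}` interpreted as `0` when `m > N_x` or `n > N_y`. -/
theorem bivariate_chebyshev_product_high_coeff (Nx Ny nq1 nq2 : ℕ)
    (a q b : ℕ → ℕ → ℝ) (f Q : MvPolynomial (Fin 2) ℝ)
    (hf : f = ∑ i ∈ Finset.range (Nx + 1), ∑ j ∈ Finset.range (Ny + 1),
        MvPolynomial.C (a i j) *
          Polynomial.aeval (MvPolynomial.X 0) (Polynomial.Chebyshev.T ℝ i) *
          Polynomial.aeval (MvPolynomial.X 1) (Polynomial.Chebyshev.T ℝ j))
    (hQ : Q = ∑ r ∈ Finset.range (nq1 + 1), ∑ s ∈ Finset.range (nq2 + 1),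
        MvPolynomial.C (q r s) *
          Polynomial.aeval (MvPolynomial.X 0) (Polynomial.Chebyshev.T ℝ r) *
          Polynomial.aeval (MvPolynomial.X 1) (Polynomial.Chebyshev.T ℝ s))
    (hb0 : ∀ i j : ℕ, (Nx + nq1 < i ∨ Ny + nq2 < j) → b i j = 0)
    (hexp : f * Q = ∑ i ∈ Finset.range (Nx + nq1 + 1), ∑ j ∈ Finset.range (Ny + nq2 + 1),
        MvPolynomial.C (b i j) *
          Polynomial.aeval (MvPolynomial.X 0) (Polynomial.Chebyshev.T ℝ i) *
          Polynomial.aeval (MvPolynomial.X 1) (Polynomial.Chebyshev.T ℝ j))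
    (i j : ℕ) (hi : nq1 + 1 ≤ i) (hj : nq2 + 1 ≤ j) :
    b i j = (1 / 4) * ∑ r ∈ Finset.range (nq1 + 1), ∑ s ∈ Finset.range (nq2 + 1),
        ((if i - r ≤ Nx ∧ j - s ≤ Ny then a (i - r) (j - s) else 0) +
         (if i - r ≤ Nx ∧ j + s ≤ Ny then a (i - r) (j + s) else 0) +
         (if i + r ≤ Nx ∧ j - s ≤ Ny then a (i + r) (j - s) else 0) +
         (if i + r ≤ Nx ∧ j + s ≤ Ny then a (i + r) (j + s) else 0)) * q r s := by
  have coeff_product : (joukowski (f * Q)).coeff (i, j) = 4⁻¹ * b i j := by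
    rw [show f * Q = tensorChebyshevSum (Nx + nq1) (Ny + nq2) b from hexp,
      coeff_joukowski_tensorChebyshevSum _ _ _ (by omega) (by omega)]
    split_ifs with h
    · rfl
    · rw [hb0 i j (by omega)]
  rw [show f = tensorChebyshevSum Nx Ny a from hf, show Q = tensorChebyshevSum nq1 nq2 q from hQ,
    coeff_joukowski_tensorChebyshevSum_mul _ _ _ _ _ _ (by omega) (by omega)] at coeff_product
  linarith
end

section
/- Existence of a bivariate Padé–Chebyshev approximant for polynomial data: for every real polynomial f(x, y) in two variables and all integers n_{p_1} ≥ n_{q_1} ≥ 1 and n_{p_2} ≥ n_{q_2} ≥ 1, there exist real bivariate polynomials P and Q with deg_x P ≤ n_{p_1}, deg_y P ≤ n_{p_2}, deg_x Q ≤ n_{q_1}, deg_y Q ≤ n_{q_2}, and Q ≠ 0, such that in the expansion of f·Q − P in the tensor Chebyshev basis {T_i(x) T_j(y)}, the coefficient of T_i(x) T_j(y) vanishes for every (i, j) with 0 ≤ i ≤ n_{p_1} and 0 ≤ j ≤ n_{p_2}, and also for every (i, j) with n_{p_1}+1 ≤ i ≤ n_{p_1}+n_{q_1}+1 and n_{p_2}+1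 ≤ j ≤ n_{p_2}+n_{q_2}+1 except (i, j) = (n_{p_1}+n_{q_1}+1, n_{p_2}+n_{q_2}+1). -/
/-!
Linear algebra: the space of admissible `Q` has dimension `(nq1 + 1)(nq2 + 1)`, while asking the
coefficients of `f * Q` on the rectangle without its corner to vanish is one condition fewer, namely
that `f * Q` vanishes in the quotient by the span of the remaining `T_i(x) T_j(y)` (these span all
polynomials, so the quotient has dimension at most the number of conditions). Hence some `Q ≠ 0`
satisfies them, and `P` is the part of the Chebyshev expansion of `f * Q` on `[0, np1] × [0, np2]`.
-/

open Polynomial Module Submodule Polynomial.Chebyshev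

theorem LinearMap.span_range_comp_eq_range {R M N ι : Type*} [Semiring R] [AddCommMonoid M]
    [Module R M] [AddCommMonoid N] [Module R N] (f : M →ₗ[R] N) {v : ι → M}
    (hv : span R (Set.range v) = ⊤) : span R (Set.range (f ∘ v)) = LinearMap.range f := by
  rw [Set.range_comp, span_image, hv, Submodule.map_top]

section Quotient

variable {K M N ι : Type*} [Field K] [AddCommGroup M] [Module K M] [AddCommGroup N] [Module K N]

theorem span_range_mkQ_span_image_compl {b : ι → N} (hb : span K (Set.range b) = ⊤) (s : Set ι) :
    span K (Set.range fun i : s => (span K (b '' sᶜ)).mkQ (b i)) = ⊤ := by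
  have hrange := (span K (b '' sᶜ)).mkQ.span_range_comp_eq_range hb
  rw [range_mkQ] at hrange
  refine eq_top_iff.mpr (hrange.ge.trans (span_le.mpr ?_))
  rintro _ ⟨i, rfl⟩
  by_cases hi : i ∈ s
  · exact subset_span ⟨⟨i, hi⟩, rfl⟩
  · have : (span K (b '' sᶜ)).mkQ (b i) = 0 :=
      (Quotient.mk_eq_zero _).mpr (subset_span ⟨i, hi, rfl⟩)
    simp [this]

theorem exists_ne_zero_map_mem_span_image_compl {b : ι → N} (hb : span K (Set.range b) = ⊤)
    (s : Finset ι) (U : Submodule K M) [FiniteDimensional K U] (hU : s.card < finrank K U)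
    (φ : M →ₗ[K] N) : ∃ u ∈ U, u ≠ 0 ∧ φ u ∈ span K (b '' (↑s)ᶜ) := by
  set W := span K (b '' (↑s)ᶜ)
  have hspan := span_range_mkQ_span_image_compl hb (s : Set ι)
  have : FiniteDimensional K (N ⧸ W) := ⟨hspan ▸ fg_span (Set.finite_range _)⟩
  have hquot : finrank K (N ⧸ W) ≤ s.card := by
    rw [← finrank_top, ← hspan]
    exact (finrank_range_le_card _).trans_eq (Fintype.card_coe s)
  obtain ⟨u, hu, hu0⟩ := exists_mem_ne_zero_of_ne_bot
    (LinearMap.ker_ne_bot_of_finrank_lt (f := W.mkQ ∘ₗ φ ∘ₗ U.subtype) (hquot.trans_lt hU))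
  exact ⟨u, u.2, by simpa using hu0, by simpa [W, Quotient.mk_eq_zero] using hu⟩

end Quotient

theorem Finsupp.exists_linearCombination_eq_sum_range_sum_range {R M : Type*} [Semiring R]
    [AddCommMonoid M] [Module R M] (v : ℕ × ℕ → M) (l : ℕ × ℕ →₀ R) :
    ∃ m n : ℕ, linearCombination R v l =
      ∑ i ∈ Finset.range (m + 1), ∑ j ∈ Finset.range (n + 1), l (i, j) • v (i, j) := by
  refine ⟨l.support.sup Prod.fst, l.support.sup Prod.snd, ?_⟩
  rw [← Finset.sum_product', linearCombination_apply_of_mem_supported R]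
  refine (mem_supported' R l).mpr fun p hp => notMem_support_iff.mp fun hl => hp ?_
  simp only [Finset.coe_product, Set.mem_prod, Finset.coe_range, Set.mem_Iio, Nat.lt_succ_iff]
  exact ⟨Finset.le_sup (f := Prod.fst) hl, Finset.le_sup (f := Prod.snd) hl⟩

theorem exists_sub_eq_linearCombination_of_mem_span_image {R M ι : Type*} [Semiring R]
    [AddCommGroup M] [Module R M] {b : ι → M} {s : Set ι} {x : M} (hx : x ∈ span R (b '' s))
    (t : Set ι) : ∃ y ∈ span R (b '' t), ∃ l ∈ Finsupp.supported R R (s \ t),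
      x - y = Finsupp.linearCombination R b l := by
  classical
  obtain ⟨l, hls, rfl⟩ := (Finsupp.mem_span_image_iff_linearCombination R).mp hx
  refine ⟨_, (Finsupp.mem_span_image_iff_linearCombination R).mpr ⟨l.filter (· ∈ t), ?_, rfl⟩,
    l.filter (· ∉ t), ?_, ?_⟩
  · exact (Finsupp.mem_supported' R _).mpr fun i hi => Finsupp.filter_apply_neg _ _ hi
  · refine (Finsupp.mem_supported' R _).mpr fun i hi => ?_
    rw [Finsupp.filter_apply, ite_eq_right_iff]
    exact fun hit => (Finsupp.mem_supported' R l).mp hls i fun his => hi ⟨his, hit⟩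
  · rw [sub_eq_iff_eq_add', ← map_add, Finsupp.filter_add_filter_not]

namespace MvPolynomial

section RestrictSupport

variable {σ R : Type*} [CommSemiring R]

theorem mem_restrictSupport_Iic_iff {e : σ →₀ ℕ} {p : MvPolynomial σ R} :
    p ∈ restrictSupport R (Set.Iic e) ↔ ∀ i, p.degreeOf i ≤ e i := by
  simp only [mem_restrictSupport_iff, Set.subset_def, Finset.mem_coe, Set.mem_Iic,
    Finsupp.le_def, degreeOf_le_iff]
  exact ⟨fun h i m hm => h m hm i, fun h m hm i => h i m hm⟩

theorem restrictSupport_Iic_mono {e e' : σ →₀ ℕ} (h : e ≤ e') :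
    restrictSupport R (Set.Iic e) ≤ restrictSupport R (Set.Iic e') :=
  restrictSupport_mono R (Set.Iic_subset_Iic.mpr h)

theorem mul_mem_restrictSupport_Iic {e e' : σ →₀ ℕ} {p q : MvPolynomial σ R}
    (hp : p ∈ restrictSupport R (Set.Iic e)) (hq : q ∈ restrictSupport R (Set.Iic e')) :
    p * q ∈ restrictSupport R (Set.Iic (e + e')) :=
  restrictSupport_mono R (Set.Iic_add_Iic_subset e e')
    ((restrictSupport_add R _ _).ge (mul_mem_mul hp hq))

theorem aeval_X_mem_restrictSupport_Iic (i : σ) {p : R[X]} {n : ℕ} (hp : p.natDegree ≤ n) :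
    Polynomial.aeval (X i) p ∈ restrictSupport R (Set.Iic (Finsupp.single i n)) := by
  rw [aeval_eq_sum_range]
  refine sum_mem fun k hk => smul_mem _ _ ?_
  rw [X_pow_eq_monomial, monomial_mem_restrictSupport, Set.mem_Iic, Finsupp.single_le_single]
  exact Or.inl (by grind)

theorem mem_restrictSupport_Iic_single_add_single_iff {a b : ℕ} {p : MvPolynomial (Fin 2) R} :
    p ∈ restrictSupport R (Set.Iic (Finsupp.single 0 a + Finsupp.single 1 b)) ↔
      p.degreeOf 0 ≤ a ∧ p.degreeOf 1 ≤ b := by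
  simp [mem_restrictSupport_Iic_iff, Fin.forall_fin_two]

theorem finrank_restrictSupport_Iic [Fintype σ] [StrongRankCondition R] (e : σ →₀ ℕ) :
    finrank R (restrictSupport R (Set.Iic e)) = ∏ i, (e i + 1) := by
  classical
  rw [finrank_eq_nat_card_basis (basisRestrictSupport R (Set.Iic e)), Nat.card_coe_set_eq,
    ← Finset.coe_Iic e, Set.ncard_coe_finset, Finsupp.card_Iic]
  simp only [Nat.card_Iic]
  exact Finset.prod_subset e.support.subset_univ fun i _ hi => by simp_all

end RestrictSupport

section Bivariate

variable {R ι κ : Type*} [CommSemiring R]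

theorem monomial_eq_aeval_X_zero_mul_aeval_X_one (d : Fin 2 →₀ ℕ) (r : R) :
    monomial d r = Polynomial.aeval (X 0) (Polynomial.monomial (d 0) r) *
      Polynomial.aeval (X 1 : MvPolynomial (Fin 2) R) (Polynomial.X ^ d 1 : R[X]) := by
  rw [monomial_eq, Finsupp.prod_fintype _ _ (fun _ => pow_zero _), Fin.prod_univ_two,
    Polynomial.aeval_monomial, algebraMap_eq, map_pow, Polynomial.aeval_X, mul_assoc]

theorem span_range_aeval_X_zero_mul_aeval_X_one {b : ι → R[X]} {c : κ → R[X]}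
    (hb : span R (Set.range b) = ⊤) (hc : span R (Set.range c) = ⊤) :
    span R (Set.range fun p : ι × κ =>
      Polynomial.aeval (X 0 : MvPolynomial (Fin 2) R) (b p.1) * Polynomial.aeval (X 1) (c p.2)) =
      ⊤ := by
  set A₀ := (Polynomial.aeval (R := R) (X 0 : MvPolynomial (Fin 2) R)).toLinearMap
  set A₁ := (Polynomial.aeval (R := R) (X 1 : MvPolynomial (Fin 2) R)).toLinearMap
  have hmul : LinearMap.range A₀ * LinearMap.range A₁ ≤
      span R (Set.range fun p : ι × κ => A₀ (b p.1) * A₁ (c p.2)) := by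
    rw [← A₀.span_range_comp_eq_range hb, ← A₁.span_range_comp_eq_range hc, span_mul_span]
    refine span_mono ?_
    rintro _ ⟨_, ⟨i, rfl⟩, _, ⟨j, rfl⟩, rfl⟩
    exact ⟨(i, j), rfl⟩
  refine eq_top_iff'.mpr fun p => hmul ?_
  induction p using MvPolynomial.induction_on' with
  | monomial d r =>
    rw [monomial_eq_aeval_X_zero_mul_aeval_X_one]
    exact mul_mem_mul ⟨_, rfl⟩ ⟨_, rfl⟩
  | add p q hp hq => exact add_mem hp hq

end Bivariate

end MvPolynomial

open MvPolynomial in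
noncomputable def chebyshevTProd (R : Type*) [CommRing R] (p : ℕ × ℕ) : MvPolynomial (Fin 2) R :=
  Polynomial.aeval (X 0) (T R p.1) * Polynomial.aeval (X 1) (T R p.2)

section Chebyshev

open MvPolynomial

variable (K : Type*) [Field K] [NeZero (2 : K)]

theorem Polynomial.Chebyshev.span_range_T : span K (Set.range fun n : ℕ => T K n) = ⊤ :=
  (chebyshevTsequence K).span fun n => by simp [chebyshevTsequence, two_ne_zero]

theorem span_range_chebyshevTProd : span K (Set.range (chebyshevTProd K)) = ⊤ :=
  span_range_aeval_X_zero_mul_aeval_X_one (b := fun n : ℕ => T K n) (c := fun n : ℕ => T K n)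
    (span_range_T K) (span_range_T K)

theorem degreeOf_le_of_mem_span_chebyshevTProd_image {a b : ℕ} {P : MvPolynomial (Fin 2) K}
    (hP : P ∈ span K (chebyshevTProd K '' {p | p.1 ≤ a ∧ p.2 ≤ b})) :
    P.degreeOf 0 ≤ a ∧ P.degreeOf 1 ≤ b := by
  refine mem_restrictSupport_Iic_single_add_single_iff.mp (span_le.mpr ?_ hP)
  rintro _ ⟨p, ⟨ha, hb⟩, rfl⟩
  refine restrictSupport_Iic_mono ?_ (mul_mem_restrictSupport_Iic
    (aeval_X_mem_restrictSupport_Iic 0 (natDegree_T K p.1).le)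
    (aeval_X_mem_restrictSupport_Iic 1 (natDegree_T K p.2).le))
  gcongr <;> simpa

theorem exists_ne_zero_mul_mem_span_chebyshevTProd_image_compl (f : MvPolynomial (Fin 2) K)
    (a b : ℕ) (s : Finset (ℕ × ℕ)) (hs : s.card < (a + 1) * (b + 1)) :
    ∃ Q : MvPolynomial (Fin 2) K, Q.degreeOf 0 ≤ a ∧ Q.degreeOf 1 ≤ b ∧ Q ≠ 0 ∧
      f * Q ∈ span K (chebyshevTProd K '' (↑s)ᶜ) := by
  set U := restrictSupport K (Set.Iic (Finsupp.single (0 : Fin 2) a + Finsupp.single 1 b))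
  have hU : finrank K U = (a + 1) * (b + 1) := by simp [U, finrank_restrictSupport_Iic]
  have : FiniteDimensional K U := finite_of_finrank_pos (by rw [hU]; positivity)
  obtain ⟨Q, hQ, hQ0, hfQ⟩ := exists_ne_zero_map_mem_span_image_compl
    (span_range_chebyshevTProd K) s U (hU ▸ hs) (LinearMap.mulLeft K f)
  obtain ⟨hQa, hQb⟩ := mem_restrictSupport_Iic_single_add_single_iff.mp hQ
  exact ⟨Q, hQa, hQb, hQ0, hfQ⟩

end Chebyshev

theorem bivariate_pade_chebyshev_exists_general (f : MvPolynomial (Fin 2) ℝ)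
    (np1 np2 nq1 nq2 : ℕ) :
    ∃ P Q : MvPolynomial (Fin 2) ℝ,
      P.degreeOf 0 ≤ np1 ∧ P.degreeOf 1 ≤ np2 ∧
      Q.degreeOf 0 ≤ nq1 ∧ Q.degreeOf 1 ≤ nq2 ∧ Q ≠ 0 ∧
      ∃ (M1 M2 : ℕ) (η : ℕ → ℕ → ℝ),
        (f * Q - P = ∑ i ∈ Finset.range (M1 + 1), ∑ j ∈ Finset.range (M2 + 1),
            MvPolynomial.C (η i j) *
              Polynomial.aeval (MvPolynomial.X 0) (Polynomial.Chebyshev.T ℝ i) *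
              Polynomial.aeval (MvPolynomial.X 1) (Polynomial.Chebyshev.T ℝ j)) ∧
        (∀ i j : ℕ, i ≤ np1 → j ≤ np2 → η i j = 0) ∧
        (∀ i j : ℕ, np1 + 1 ≤ i → i ≤ np1 + nq1 + 1 → np2 + 1 ≤ j → j ≤ np2 + nq2 + 1 →
          (i, j) ≠ (np1 + nq1 + 1, np2 + nq2 + 1) → η i j = 0) := by
  set B := (Finset.Icc (np1 + 1) (np1 + nq1 + 1) ×ˢ Finset.Icc (np2 + 1) (np2 + nq2 + 1)).erase
    (np1 + nq1 + 1, np2 + nq2 + 1)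
  have hB : B.card < (nq1 + 1) * (nq2 + 1) := by
    refine (Finset.card_erase_lt_of_mem (by simp)).trans_eq ?_
    rw [Finset.card_product, Nat.card_Icc, Nat.card_Icc]
    congr 1 <;> omega
  obtain ⟨Q, hQ₀, hQ₁, hQ, hfQ⟩ :=
    exists_ne_zero_mul_mem_span_chebyshevTProd_image_compl ℝ f nq1 nq2 B hB
  obtain ⟨P, hP, η, hη, hfQP⟩ :=
    exists_sub_eq_linearCombination_of_mem_span_image hfQ {p | p.1 ≤ np1 ∧ p.2 ≤ np2}
  obtain ⟨hP₀, hP₁⟩ := degreeOf_le_of_mem_span_chebyshevTProd_image ℝ hP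
  obtain ⟨M1, M2, hsum⟩ :=
    Finsupp.exists_linearCombination_eq_sum_range_sum_range (chebyshevTProd ℝ) η
  refine ⟨P, Q, hP₀, hP₁, hQ₀, hQ₁, hQ, M1, M2, fun i j => η (i, j), ?_,
    fun i j hi hj => ?_, fun i j hi₁ hi₂ hj₁ hj₂ hij => ?_⟩
  · simp only [hfQP, hsum, chebyshevTProd, MvPolynomial.smul_eq_C_mul, mul_assoc]
  · exact (Finsupp.mem_supported' ℝ η).mp hη (i, j) fun h => h.2 ⟨hi, hj⟩
  · have hijB : (i, j) ∈ B := Finset.mem_erase.mpr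
      ⟨hij, Finset.mem_product.mpr ⟨Finset.mem_Icc.mpr ⟨hi₁, hi₂⟩, Finset.mem_Icc.mpr ⟨hj₁, hj₂⟩⟩⟩
    exact (Finsupp.mem_supported' ℝ η).mp hη (i, j) fun h => h.1 hijB

/-- Existence of a bivariate Padé–Chebyshev approximant for polynomial data: for
every bivariate real polynomial `f` and integers `n_{p_i} ≥ n_{q_i} ≥ 1`, there
are bivariate polynomials `P, Q` with `deg_x P ≤ n_{p_1}`, `deg_y P ≤ n_{p_2}`,
`deg_x Q ≤ n_{q_1}`, `deg_y Q ≤ n_{q_2}`, `Q ≠ 0`, such that in the tensor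
Chebyshev expansion `f·Q − P = ∑_{i,j} η_{i,j} T_i(x) T_j(y)` the coefficient
`η_{i,j}` vanishes for all `(i,j)` with `i ≤ n_{p_1}`, `j ≤ n_{p_2}`, and for all
`(i,j)` in the rectangle `[n_{p_1}+1, n_{p_1}+n_{q_1}+1] × [n_{p_2}+1, n_{p_2}+n_{q_2}+1]`
except its top corner. -/
theorem bivariate_pade_chebyshev_exists (f : MvPolynomial (Fin 2) ℝ)
    (np1 np2 nq1 nq2 : ℕ)
    (h1 : 1 ≤ nq1) (h2 : nq1 ≤ np1) (h3 : 1 ≤ nq2) (h4 : nq2 ≤ np2) :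
    ∃ P Q : MvPolynomial (Fin 2) ℝ,
      P.degreeOf 0 ≤ np1 ∧ P.degreeOf 1 ≤ np2 ∧
      Q.degreeOf 0 ≤ nq1 ∧ Q.degreeOf 1 ≤ nq2 ∧ Q ≠ 0 ∧
      ∃ (M1 M2 : ℕ) (η : ℕ → ℕ → ℝ),
        (f * Q - P = ∑ i ∈ Finset.range (M1 + 1), ∑ j ∈ Finset.range (M2 + 1),
            MvPolynomial.C (η i j) *
              Polynomial.aeval (MvPolynomial.X 0) (Polynomial.Chebyshev.T ℝ i) *
              Polynomial.aeval (MvPolynomial.X 1) (Polynomial.Chebyshev.T ℝ j)) ∧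
        (∀ i j : ℕ, i ≤ np1 → j ≤ np2 → η i j = 0) ∧
        (∀ i j : ℕ, np1 + 1 ≤ i → i ≤ np1 + nq1 + 1 → np2 + 1 ≤ j → j ≤ np2 + nq2 + 1 →
          (i, j) ≠ (np1 + nq1 + 1, np2 + nq2 + 1) → η i j = 0) :=
  bivariate_pade_chebyshev_exists_general f np1 np2 nq1 nq2
end
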